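/- arXiv:1911.00243 — 4 statements merged into one kernel-verified Lean document; each statement's English description precedes it below -/
import Mathlib

section
/- Fix q₀ ∈ ℝ with 0 < q₀ < 1 and set q(t) = q₀^t for t ∈ (0,1]. Then (q(t) − 1)·ℓ_{q(t)}(Q) converges, as t → 0⁺, to the principal branch log(Q) of the complex logarithm, uniformly on every compact subset of ℂ∖ℝ_{≤0}. (For real q ∈ (0,1) the q-logarithm ℓ_q is well defined on ℂ∖ℝ_{≤0}, since the zeros of θ_q all lie on the negative real axis.) -/
/-! With `q = e^u`, `u < 0`, and `Q = e^{2πiz + u/2}`, the theta series `θ_q(Q)` is Jacobi's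
`θ(z, τ)` with `τ = u / 2πi`, so `ℓ_q = -(2πi)⁻¹ ∂_z log θ(z, τ)`. The modular transformation
`τ ↦ -1/τ` turns this into
`ℓ_q(Q) = w - θ'(w, τ') / (u θ(w, τ'))`, `w = (log Q - u/2) / u`, `τ' = -2πi / u`.
As `u → 0⁻`, `Im τ' = 2π/|u| → ∞` while `|Im w| = |arg Q| / |u| ≤ (A / 2π) Im τ'` with `A < π` on a
compact subset of the slit plane. In this regime every term `n ≠ 0` of the theta series decays
uniformly, so `θ(w, τ') → 1` and `θ'(w, τ') → 0`, and
`(e^u - 1) ℓ_q(Q) = (e^u - 1)/u · (log Q - u/2 - θ'/θ)` tends to `log Q`. -/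

open Complex Filter

/-- Jacobi's theta function `θ_q(Q) = Σ_{d ∈ ℤ} q^{d(d-1)/2} Q^d`. -/
noncomputable def theta (q Q : ℂ) : ℂ :=
  ∑' d : ℤ, q ^ (d * (d - 1) / 2).toNat * Q ^ d

/-- The q-logarithm `ℓ_q(Q) = -Q·θ_q′(Q)/θ_q(Q)`. -/
noncomputable def ellq (q Q : ℂ) : ℂ :=
  -Q * deriv (theta q) Q / theta q Q

open Real Topology

lemma natCast_toNat_mul_sub_one_div_two (n : ℤ) :
    (((n * (n - 1) / 2).toNat : ℕ) : ℂ) = n * (n - 1) / 2 := by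
  obtain ⟨m, hm⟩ := Int.even_mul_pred_self n
  have hm0 : 0 ≤ m := by rcases le_or_gt n 0 with h | h <;> nlinarith
  have hmC : (n : ℂ) * (n - 1) = m + m := by exact_mod_cast hm
  rw [show n * (n - 1) / 2 = m by omega, ← Int.cast_natCast, Int.toNat_of_nonneg hm0]
  linear_combination (-1 / 2 : ℂ) * hmC

lemma theta_cexp_eq_jacobiTheta₂ (u : ℂ) {Q : ℂ} (hQ : Q ≠ 0) :
    theta (cexp u) Q = jacobiTheta₂ ((log Q - u / 2) / (2 * π * I)) (u / (2 * π * I)) := by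
  refine tsum_congr fun n => ?_
  have hQn : Q ^ n = cexp (n * log Q) := by rw [exp_int_mul, exp_log hQ]
  rw [jacobiTheta₂_term, hQn, ← Complex.exp_nat_mul, ← Complex.exp_add,
    natCast_toNat_mul_sub_one_div_two]
  congr 1
  field_simp
  ring

lemma im_div_two_pi_I (u : ℂ) : (u / (2 * π * I)).im = -u.re / (2 * π) := by
  simp [div_eq_mul_inv, mul_comm]

lemma hasDerivAt_theta_cexp {u : ℂ} (hu : u.re < 0) {Q : ℂ} (hQ : Q ∈ slitPlane) :
    HasDerivAt (theta (cexp u))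
      (jacobiTheta₂' ((log Q - u / 2) / (2 * π * I)) (u / (2 * π * I)) * (Q⁻¹ / (2 * π * I)))
      Q := by
  have hτ : 0 < (u / (2 * π * I)).im := by
    rw [im_div_two_pi_I]; exact div_pos (by linarith) (by positivity)
  refine ((hasDerivAt_jacobiTheta₂_fst _ hτ).comp Q
    (((hasDerivAt_log hQ).sub_const _).div_const _)).congr_of_eventuallyEq ?_
  filter_upwards [compl_singleton_mem_nhds (slitPlane_ne_zero hQ)] with Q' hQ'
  exact theta_cexp_eq_jacobiTheta₂ u hQ'

lemma ellq_cexp_eq_jacobiTheta₂ {u : ℂ} (hu : u.re < 0) {Q : ℂ} (hQ : Q ∈ slitPlane) :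
    ellq (cexp u) Q =
      -(jacobiTheta₂' ((log Q - u / 2) / (2 * π * I)) (u / (2 * π * I)) /
        jacobiTheta₂ ((log Q - u / 2) / (2 * π * I)) (u / (2 * π * I))) / (2 * π * I) := by
  rw [ellq, (hasDerivAt_theta_cexp hu hQ).deriv,
    theta_cexp_eq_jacobiTheta₂ u (slitPlane_ne_zero hQ)]
  field_simp [slitPlane_ne_zero hQ]

lemma jacobiTheta₂'_div_jacobiTheta₂_functional_equation {z τ : ℂ}
    (hθ : jacobiTheta₂ (z / τ) (-1 / τ) ≠ 0) :
    jacobiTheta₂' z τ / jacobiTheta₂ z τ = -(2 * π * I * z / τ) +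
      jacobiTheta₂' (z / τ) (-1 / τ) / (τ * jacobiTheta₂ (z / τ) (-1 / τ)) := by
  have hτ : τ ≠ 0 := by
    rintro rfl
    exact hθ (jacobiTheta₂_undef _ (by simp))
  have hA : (-I * τ) ^ (1 / 2 : ℂ) ≠ 0 := by
    simp [cpow_eq_zero_iff, hτ]
  rw [jacobiTheta₂_functional_equation z τ, jacobiTheta₂'_functional_equation z τ]
  generalize jacobiTheta₂ (z / τ) (-1 / τ) = θ at hθ ⊢
  field_simp
  ring

lemma ellq_cexp_eq_modular {u : ℂ} (hu : u.re < 0) {Q : ℂ} (hQ : Q ∈ slitPlane)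
    (hθ : jacobiTheta₂ ((log Q - u / 2) / u) (-(2 * π * I) / u) ≠ 0) :
    ellq (cexp u) Q = (log Q - u / 2) / u -
      jacobiTheta₂' ((log Q - u / 2) / u) (-(2 * π * I) / u) /
        (u * jacobiTheta₂ ((log Q - u / 2) / u) (-(2 * π * I) / u)) := by
  have hu0 : u ≠ 0 := by rintro rfl; simp at hu
  have hz : (log Q - u / 2) / (2 * π * I) / (u / (2 * π * I)) = (log Q - u / 2) / u := by
    field_simp
  have hτ : -1 / (u / (2 * π * I)) = -(2 * π * I) / u := by
    field_simp
  rw [ellq_cexp_eq_jacobiTheta₂ hu hQ,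
    jacobiTheta₂'_div_jacobiTheta₂_functional_equation (by rwa [hz, hτ]), hz, hτ]
  field_simp
  ring

noncomputable def thetaBound (S T : ℝ) : ℝ :=
  ∑' n : ℤ, ((|n| : ℤ) : ℝ) * rexp (-π * (T * n ^ 2 - 2 * S * |n|))

lemma summable_thetaBound (S : ℝ) {T : ℝ} (hT : 0 < T) :
    Summable fun n : ℤ => ((|n| : ℤ) : ℝ) * rexp (-π * (T * n ^ 2 - 2 * S * |n|)) := by
  simpa using summable_pow_mul_jacobiTheta₂_term_bound S hT 1

lemma thetaBound_nonneg (S T : ℝ) : 0 ≤ thetaBound S T :=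
  tsum_nonneg fun n => by positivity

section bounds

variable {S T : ℝ} {z τ : ℂ}

lemma norm_jacobiTheta₂_sub_one_le (hT : 0 < T) (hz : |z.im| ≤ S) (hτ : T ≤ τ.im) :
    ‖jacobiTheta₂ z τ - 1‖ ≤ thetaBound S T := by
  refine ((hasSum_jacobiTheta₂_term z (hT.trans_le hτ)).sub (hasSum_ite_eq 0 1)).norm_le_of_bounded
    (summable_thetaBound S hT).hasSum fun n => ?_
  rcases eq_or_ne n 0 with rfl | hn
  · simp [jacobiTheta₂_term]
  · rw [if_neg hn, sub_zero]
    have h1 : (1 : ℝ) ≤ ((|n| : ℤ) : ℝ) := by exact_mod_cast Int.one_le_abs hn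
    exact (norm_jacobiTheta₂_term_le hT hz hτ n).trans (le_mul_of_one_le_left (exp_pos _).le h1)

lemma norm_jacobiTheta₂'_le (hT : 0 < T) (hz : |z.im| ≤ S) (hτ : T ≤ τ.im) :
    ‖jacobiTheta₂' z τ‖ ≤ 2 * π * thetaBound S T := by
  refine (hasSum_jacobiTheta₂'_term z (hT.trans_le hτ)).norm_le_of_bounded
    ((summable_thetaBound S hT).hasSum.mul_left (2 * π)) fun n => ?_
  rw [← mul_assoc]
  exact norm_jacobiTheta₂'_term_le hT hz hτ n

lemma half_le_norm_jacobiTheta₂ (hT : 0 < T) (hz : |z.im| ≤ S) (hτ : T ≤ τ.im)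
    (hB : thetaBound S T ≤ 1 / 2) : 1 / 2 ≤ ‖jacobiTheta₂ z τ‖ := by
  have := norm_jacobiTheta₂_sub_one_le hT hz hτ
  have := norm_sub_norm_le (1 : ℂ) (jacobiTheta₂ z τ)
  rw [norm_one, norm_sub_rev] at this
  linarith

lemma norm_jacobiTheta₂'_div_jacobiTheta₂_le (hT : 0 < T) (hz : |z.im| ≤ S) (hτ : T ≤ τ.im)
    (hB : thetaBound S T ≤ 1 / 2) :
    ‖jacobiTheta₂' z τ / jacobiTheta₂ z τ‖ ≤ 4 * π * thetaBound S T := by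
  have hθ := half_le_norm_jacobiTheta₂ hT hz hτ hB
  rw [norm_div, div_le_iff₀ (by linarith)]
  calc ‖jacobiTheta₂' z τ‖ ≤ 2 * π * thetaBound S T := norm_jacobiTheta₂'_le hT hz hτ
    _ = 4 * π * thetaBound S T * (1 / 2) := by ring
    _ ≤ 4 * π * thetaBound S T * ‖jacobiTheta₂ z τ‖ := by
      have := thetaBound_nonneg S T
      gcongr

end bounds

lemma sq_sub_two_mul_abs_pos {c : ℝ} (hc : c < 1 / 2) {n : ℤ} (hn : n ≠ 0) :
    0 < (n : ℝ) ^ 2 - 2 * c * |n| := by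
  have h1 : (1 : ℝ) ≤ |n| := by exact_mod_cast Int.one_le_abs hn
  rw [Int.cast_abs, ← sq_abs] at *
  nlinarith

lemma tendsto_thetaBound_atTop {c : ℝ} (hc : c < 1 / 2) :
    Tendsto (fun T => thetaBound (c * T) T) atTop (𝓝 0) := by
  have hexp (T : ℝ) (n : ℤ) : -π * (T * n ^ 2 - 2 * (c * T) * |n|)
      = -(π * ((n : ℝ) ^ 2 - 2 * c * |n|)) * T := by ring
  rw [← tsum_zero]
  refine tendsto_tsum_of_dominated_convergence (summable_thetaBound c one_pos) (fun n => ?_) ?_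
  · rcases eq_or_ne n 0 with rfl | hn
    · simp
    · simp only [hexp]
      have hneg : -(π * ((n : ℝ) ^ 2 - 2 * c * |n|)) < 0 :=
        neg_neg_of_pos (mul_pos pi_pos (sq_sub_two_mul_abs_pos hc hn))
      simpa using ((tendsto_exp_atBot.comp (tendsto_id.const_mul_atTop_of_neg hneg)).const_mul
        ((|n| : ℤ) : ℝ))
  -- for `T ≥ 1` the series at `T = 1` dominates, since `n ^ 2 - 2 c |n| ≥ 0`
  · filter_upwards [eventually_ge_atTop 1] with T hT n
    rw [norm_mul, norm_of_nonneg (by positivity), norm_of_nonneg (exp_pos _).le, hexp, one_mul]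
    rcases eq_or_ne n 0 with rfl | hn
    · simp
    have := mul_pos pi_pos (sq_sub_two_mul_abs_pos hc hn)
    exact mul_le_mul_of_nonneg_left (exp_le_exp.mpr (by nlinarith)) (by positivity)

lemma tendsto_thetaBound_nhdsLT {A : ℝ} (hA : A < π) :
    Tendsto (fun u => thetaBound (A / -u) (2 * π / -u)) (𝓝[<] 0) (𝓝 0) := by
  have hT : Tendsto (fun u : ℝ => 2 * π / -u) (𝓝[<] 0) atTop := by
    simpa [div_neg, div_eq_mul_inv] using
      tendsto_inv_nhdsLT_zero.const_mul_atBot_of_neg (neg_neg_of_pos two_pi_pos)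
  refine ((tendsto_thetaBound_atTop (c := A / (2 * π)) ?_).comp hT).congr fun u => ?_
  · rw [div_lt_iff₀ two_pi_pos]
    linarith
  · simp only [Function.comp_apply]
    congr 1
    field_simp

lemma abs_exp_sub_one_div_sub_one_le {u : ℝ} (hu0 : u ≠ 0) (hu : |u| ≤ 1) :
    |(rexp u - 1) / u - 1| ≤ |u| := by
  rw [show (rexp u - 1) / u - 1 = (rexp u - 1 - u) / u by field_simp, abs_div,
    div_le_iff₀ (abs_pos.mpr hu0), ← sq, sq_abs]
  exact abs_exp_sub_one_sub_id_le hu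

lemma exists_ellq_cexp_eq_of_abs_arg_le {u A : ℝ} (hu : u < 0) {Q : ℂ} (hQ : Q ∈ slitPlane)
    (harg : |arg Q| ≤ A) (hB : thetaBound (A / -u) (2 * π / -u) ≤ 1 / 2) :
    ∃ R : ℂ, ‖R‖ ≤ 4 * π * thetaBound (A / -u) (2 * π / -u) ∧
      ellq (cexp u) Q = (log Q - u / 2 - R) / u := by
  have hu0 : (u : ℂ) ≠ 0 := ofReal_ne_zero.mpr hu.ne
  have hT : 0 < 2 * π / -u := div_pos two_pi_pos (neg_pos.mpr hu)
  have hw : |((log Q - u / 2) / u).im| ≤ A / -u := by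
    rw [div_ofReal_im, sub_im, log_im, div_ofNat_im, ofReal_im, zero_div, sub_zero, abs_div,
      abs_of_neg hu]
    gcongr
    linarith
  have hτ : 2 * π / -u ≤ (-(2 * π * I) / u).im := by
    simp [neg_div, div_neg]
  have hθ := half_le_norm_jacobiTheta₂ hT hw hτ hB
  refine ⟨_, norm_jacobiTheta₂'_div_jacobiTheta₂_le hT hw hτ hB, ?_⟩
  rw [ellq_cexp_eq_modular (by simpa using hu) hQ (norm_pos_iff.mp (by linarith))]
  field_simp

lemma norm_cexp_sub_one_mul_ellq_sub_log_le {u A : ℝ} (hu : u < 0) (hu1 : -1 ≤ u) {Q : ℂ}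
    (hQ : Q ∈ slitPlane) (harg : |arg Q| ≤ A) (hB : thetaBound (A / -u) (2 * π / -u) ≤ 1 / 2) :
    ‖(cexp u - 1) * ellq (cexp u) Q - log Q‖ ≤
      -u * (‖log Q‖ + 1) + 8 * π * thetaBound (A / -u) (2 * π / -u) := by
  obtain ⟨R, hR, hell⟩ := exists_ellq_cexp_eq_of_abs_arg_le hu hQ harg hB
  set a := (rexp u - 1) / u
  have ha1 : |a - 1| ≤ -u := by
    simpa [abs_of_neg hu] using
      abs_exp_sub_one_div_sub_one_le hu.ne (by rw [abs_of_neg hu]; linarith)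
  have ha : |a| ≤ 2 := by
    have := abs_sub_abs_le_abs_sub a 1
    rw [abs_one] at this
    linarith
  have hu0 : (u : ℂ) ≠ 0 := ofReal_ne_zero.mpr hu.ne
  have hexp : cexp u - 1 = a * u := by
    push_cast [a, ← ofReal_exp]
    field_simp
  clear_value a
  have key : (cexp u - 1) * ellq (cexp u) Q - log Q =
      ((a - 1 : ℝ) : ℂ) * log Q - ((a * (u / 2) : ℝ) : ℂ) - (a : ℂ) * R := by
    rw [hell, hexp]
    push_cast
    field_simp
    ring
  rw [key]
  calc _ ≤ ‖((a - 1 : ℝ) : ℂ) * log Q‖ + ‖((a * (u / 2) : ℝ) : ℂ)‖ + ‖(a : ℂ) * R‖ :=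
        (norm_sub_le _ _).trans (add_le_add_left (norm_sub_le _ _) _)
    _ = |a - 1| * ‖log Q‖ + |a| * (-u / 2) + |a| * ‖R‖ := by
        rw [norm_mul, norm_mul, norm_real, norm_real, norm_real, Real.norm_eq_abs,
          Real.norm_eq_abs, Real.norm_eq_abs, abs_mul, abs_div, abs_of_neg hu, abs_two]
    _ ≤ -u * ‖log Q‖ + 2 * (-u / 2) + 2 * (4 * π * thetaBound (A / -u) (2 * π / -u)) := by
        have : 0 ≤ -u := by linarith
        gcongr
    _ = _ := by ring

lemma IsCompact.exists_abs_arg_le_of_subset_slitPlane {K : Set ℂ} (hK : IsCompact K)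
    (hKs : K ⊆ slitPlane) : ∃ A < π, ∀ Q ∈ K, |arg Q| ≤ A := by
  rcases K.eq_empty_or_nonempty with rfl | hne
  · exact ⟨0, pi_pos, by simp⟩
  obtain ⟨Q₀, hQ₀, hmax⟩ := hK.exists_isMaxOn hne
    fun Q hQ => (continuousAt_arg (hKs hQ)).abs.continuousWithinAt
  exact ⟨|arg Q₀|, abs_lt.mpr ⟨neg_pi_lt_arg _, (arg_le_pi _).lt_of_ne
    (slitPlane_arg_ne_pi (hKs hQ₀))⟩, fun Q hQ => hmax hQ⟩

lemma tendstoUniformlyOn_of_eventually_norm_sub_le {ι α E : Type*} [SeminormedAddCommGroup E]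
    {F : ι → α → E} {f : α → E} {l : Filter ι} {s : Set α} {b : ι → ℝ}
    (hb : Tendsto b l (𝓝 0)) (h : ∀ᶠ i in l, ∀ x ∈ s, ‖F i x - f x‖ ≤ b i) :
    TendstoUniformlyOn F f l s :=
  Metric.tendstoUniformlyOn_iff.mpr fun ε hε =>
    (h.and (hb.eventually (gt_mem_nhds hε))).mono fun _ hi x hx => by
      rw [dist_comm, dist_eq_norm]
      exact (hi.1 x hx).trans_lt hi.2

theorem tendstoUniformlyOn_cexp_sub_one_mul_ellq {K : Set ℂ} (hK : IsCompact K)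
    (hKs : K ⊆ slitPlane) :
    TendstoUniformlyOn (fun (u : ℝ) Q => (cexp u - 1) * ellq (cexp u) Q) log (𝓝[<] 0) K := by
  obtain ⟨A, hAπ, hA⟩ := hK.exists_abs_arg_le_of_subset_slitPlane hKs
  obtain ⟨M, hM⟩ := hK.exists_bound_of_continuousOn
    fun Q hQ => (continuousAt_clog (hKs hQ)).continuousWithinAt
  have hB := tendsto_thetaBound_nhdsLT hAπ
  have hneg : Tendsto (fun u : ℝ => -u) (𝓝[<] 0) (𝓝 0) :=
    (continuous_neg.tendsto' 0 0 neg_zero).mono_left nhdsWithin_le_nhds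
  refine tendstoUniformlyOn_of_eventually_norm_sub_le
    (b := fun u => -u * (M + 1) + 8 * π * thetaBound (A / -u) (2 * π / -u))
    (by simpa using (hneg.mul_const (M + 1)).add (hB.const_mul (8 * π))) ?_
  filter_upwards [self_mem_nhdsWithin, Ioo_mem_nhdsLT (neg_one_lt_zero (R := ℝ)),
    hB.eventually (ge_mem_nhds one_half_pos)] with u hu hu1 hBu Q hQ
  refine (norm_cexp_sub_one_mul_ellq_sub_log_le hu hu1.1.le (hKs hQ) (hA Q hQ) hBu).trans ?_
  have : 0 ≤ -u := by linarith [hu1.2]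
  gcongr
  exact hM Q hQ

/-- With `q(t) = q₀^t`, the functions `(q(t) - 1)·ℓ_{q(t)}` converge, as `t → 0⁺`, to the
principal branch of the logarithm, uniformly on every compact subset of `ℂ ∖ ℝ_{≤0}`
(the slit plane). -/
theorem stmt4 (q₀ : ℝ) (hq0 : 0 < q₀) (hq1 : q₀ < 1) :
    ∀ K : Set ℂ, IsCompact K → K ⊆ Complex.slitPlane →
      TendstoUniformlyOn
        (fun (t : ℝ) (Q : ℂ) => (((q₀ ^ t : ℝ) : ℂ) - 1) * ellq ((q₀ ^ t : ℝ) : ℂ) Q)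
        (fun Q => Complex.log Q)
        (nhdsWithin (0 : ℝ) (Set.Ioi 0)) K := by
  intro K hK hKs
  have hu : Tendsto (fun t : ℝ => Real.log q₀ * t) (𝓝[>] 0) (𝓝[<] 0) :=
    tendsto_nhdsWithin_of_tendsto_nhds_of_eventually_within _
      ((continuous_const_mul _).tendsto' 0 0 (mul_zero _) |>.mono_left nhdsWithin_le_nhds)
      (eventually_nhdsWithin_of_forall fun t ht => mul_neg_of_neg_of_pos (log_neg hq0 hq1) ht)
  simp only [rpow_def_of_pos hq0, ofReal_exp]
  exact fun U hU => hu.eventually (tendstoUniformlyOn_cexp_sub_one_mul_ellq hK hKs U hU)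
end

section
/- Let N ∈ ℕ, let q ∈ ℂ∖{0}, and let a_0, …, a_N ∈ ℂ be such that a_i = 1 for some index i ∈ {0,…,N} and q^r·a_j ≠ 1 for every j ∈ {0,…,N} and every integer r ≥ 1. Define the formal power series g ∈ ℂ[[Q]] whose d-th coefficient is (∏_{j=0}^N ∏_{r=1}^d (1 − q^r a_j))^{−1}. Then g satisfies the q-difference equation (1 − a_0·σ_q)∘(1 − a_1·σ_q)∘⋯∘(1 − a_N·σ_q)(g) = Q·g, where the operators are composed as ℂ-linear endomorphisms of ℂ[[Q]]. (Taking a_j = Λ_jΛ_i^{−1}, this is the q-difference equation (1 − Λ_0 σ_q)⋯(1 − Λ_N σ_q)F = QF satisfied by the specialization at P = Λ_i of Givental's small equivariant K-theoretical J-function of ℙ^N, after removing the q-character prefactor Λ_i^{−ℓ_q(Q)}.) -/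
open Complex Filter PowerSeries

/-! Each `1 - b σ_q` acts diagonally, multiplying the coefficient of `Q^d` by `1 - q^d b`, so the
whole operator multiplies it by `∏_j (1 - q^d a_j)`. For `d = 0` this factor vanishes because some
`a_i = 1`, matching the zero constant term of `Q·g`; for `d ≥ 1` it is nonzero and cancels the
top factor `r = d` of the denominator of the `d`-th coefficient of `g`, leaving the `(d-1)`-th. -/

lemma coeff_foldr_ofFn_sub_C_mul_rescale {R : Type*} [CommRing R] {n : ℕ} (q : R)
    (a : Fin n → R) (f : R⟦X⟧) (d : ℕ) :
    coeff d ((List.ofFn (fun j : Fin n => (fun f : R⟦X⟧ =>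
        f - C (a j) * mk fun d => q ^ d * coeff d f))).foldr (· ∘ ·) id f)
      = (∏ j, (1 - q ^ d * a j)) * coeff d f := by
  induction n with
  | zero => simp
  | succ n ih =>
    simp only [List.ofFn_succ, List.foldr_cons, Function.comp_apply, map_sub, coeff_C_mul,
      coeff_mk, ih, Fin.prod_univ_succ]
    ring

lemma mul_inv_prod_Icc_one_succ {K : Type*} [Field K] (c : ℕ → K) {d : ℕ} (hc : c (d + 1) ≠ 0) :
    c (d + 1) * (∏ r ∈ Finset.Icc 1 (d + 1), c r)⁻¹ = (∏ r ∈ Finset.Icc 1 d, c r)⁻¹ := by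
  rw [Finset.prod_Icc_succ_top (by omega), mul_inv, mul_left_comm, mul_inv_cancel₀ hc, mul_one]

theorem stmt6_general (N : ℕ) (q : ℂ) (a : Fin (N + 1) → ℂ)
    (hone : ∃ i, a i = 1)
    (hres : ∀ j, ∀ r : ℕ, 1 ≤ r → q ^ r * a j ≠ 1) :
    (List.ofFn (fun j : Fin (N + 1) => (fun f : PowerSeries ℂ =>
          f - PowerSeries.C (a j) *
            PowerSeries.mk fun d => q ^ d * PowerSeries.coeff d f))).foldr (· ∘ ·) id
        (PowerSeries.mk fun d =>
          (∏ j : Fin (N + 1), ∏ r ∈ Finset.Icc 1 d, (1 - q ^ r * a j))⁻¹) =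
      PowerSeries.X *
        PowerSeries.mk fun d =>
          (∏ j : Fin (N + 1), ∏ r ∈ Finset.Icc 1 d, (1 - q ^ r * a j))⁻¹ := by
  ext d
  rw [coeff_foldr_ofFn_sub_C_mul_rescale, coeff_mk]
  cases d with
  | zero =>
    obtain ⟨i, hi⟩ := hone
    simpa using Finset.prod_eq_zero (f := fun j => 1 - a j) (Finset.mem_univ i) (by simp [hi])
  | succ d =>
    rw [coeff_succ_X_mul, coeff_mk, Finset.prod_comm, Finset.prod_comm (s := Finset.univ)]
    exact mul_inv_prod_Icc_one_succ (fun r => ∏ j, (1 - q ^ r * a j)) <|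
      Finset.prod_ne_zero_iff.2 fun j _ => sub_ne_zero.2 (hres j (d + 1) d.succ_pos).symm

/-- The q-difference equation `(1 - a₀σ_q)⋯(1 - a_Nσ_q) g = Q·g` for the formal power series
`g = Σ_d Q^d / ∏_{j=0}^N ∏_{r=1}^d (1 - q^r a_j)`, where `σ_q` is the substitution
`Q ↦ qQ` on `ℂ[[Q]]`.  (This is the q-difference equation satisfied by the specialization
at `P = Λ_i` of Givental's small equivariant K-theoretical J-function of `ℙ^N`, with
`a_j = Λ_jΛ_i⁻¹`, after removing the q-character prefactor.) -/
theorem stmt6 (N : ℕ) (q : ℂ) (hq : q ≠ 0) (a : Fin (N + 1) → ℂ)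
    (hone : ∃ i, a i = 1)
    (hres : ∀ j, ∀ r : ℕ, 1 ≤ r → q ^ r * a j ≠ 1) :
    (List.ofFn (fun j : Fin (N + 1) => (fun f : PowerSeries ℂ =>
          f - PowerSeries.C (a j) *
            PowerSeries.mk fun d => q ^ d * PowerSeries.coeff d f))).foldr (· ∘ ·) id
        (PowerSeries.mk fun d =>
          (∏ j : Fin (N + 1), ∏ r ∈ Finset.Icc 1 d, (1 - q ^ r * a j))⁻¹) =
      PowerSeries.X *
        PowerSeries.mk fun d =>
          (∏ j : Fin (N + 1), ∏ r ∈ Finset.Icc 1 d, (1 - q ^ r * a j))⁻¹ :=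
  stmt6_general N q a hone hres
end

section
/- Let N ∈ ℕ, let z ∈ ℂ∖{0}, let λ_0, …, λ_N ∈ ℂ, and fix i ∈ {0,…,N}. Assume the non-resonance condition λ_i − λ_j + rz ≠ 0 for every j ∈ {0,…,N} and every integer r ≥ 1. Define the formal power series h ∈ ℂ[[Q]] whose d-th coefficient is ∏_{r=1}^d ∏_{j=0}^N (λ_i − λ_j + rz)^{−1}. Then h satisfies the differential equation ((λ_i − λ_0) + z·D)∘((λ_i − λ_1) + z·D)∘⋯∘((λ_i − λ_N) + z·D)(h) = Q·h, where the operators are composed as ℂ-linear endomorphisms of ℂ[[Q]]. (This is the differential equation (−λ_0 + zQ∂_Q)⋯(−λ_N + zQ∂_Q)J = QJ satisfied by the specialization at H = λ_i of Givental's small equivariant cohomological J-function of ℙ^N, after removing the prefactor Q^{λ_i/z}.) -/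
open Complex Filter PowerSeries

/-! On `Q^d` the operator `(λ_i - λ_j) + z D` acts by the scalar `λ_i - λ_j + d z`, so the
composite acts by `a d = ∏_j (λ_i - λ_j + d z)`.  The coefficients `h_d = ∏_{r ≤ d} (a r)⁻¹`
satisfy `a (d + 1) h_{d+1} = h_d`, and `a 0 = 0` because of the factor `j = i`; together these
say precisely that the composite sends `h` to `Q h`. -/

noncomputable def eulerShift {R : Type*} [CommSemiring R] (z c : R) (f : R⟦X⟧) : R⟦X⟧ :=
  PowerSeries.C c * f + PowerSeries.C z * PowerSeries.mk fun n => (n : R) * PowerSeries.coeff n f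

section EulerShift

variable {R : Type*} [CommSemiring R]

theorem coeff_eulerShift (z c : R) (f : R⟦X⟧) (d : ℕ) :
    PowerSeries.coeff d (eulerShift z c f) = (c + d * z) * PowerSeries.coeff d f := by
  simp only [eulerShift, map_add, PowerSeries.coeff_C_mul, PowerSeries.coeff_mk]
  ring

theorem coeff_foldr_map_eulerShift (z : R) (L : List R) (f : R⟦X⟧) (d : ℕ) :
    PowerSeries.coeff d ((L.map (eulerShift z)).foldr (· ∘ ·) id f) =
      (L.map (· + d * z)).prod * PowerSeries.coeff d f := by
  induction L with
  | nil => simp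
  | cons c L ih =>
    rw [List.map_cons, List.foldr_cons, Function.comp_apply, coeff_eulerShift, ih,
      List.map_cons, List.prod_cons, mul_assoc]

end EulerShift

theorem mk_mul_prod_Icc_inv_eq_X_mul {K : Type*} [Field K] (a : ℕ → K) (h0 : a 0 = 0)
    (ha : ∀ r, 1 ≤ r → a r ≠ 0) :
    PowerSeries.mk (fun d => a d * ∏ r ∈ Finset.Icc 1 d, (a r)⁻¹) =
      PowerSeries.X * PowerSeries.mk fun d => ∏ r ∈ Finset.Icc 1 d, (a r)⁻¹ := by
  ext (_ | d)
  · simp [h0]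
  · rw [PowerSeries.coeff_mk, PowerSeries.coeff_succ_X_mul, PowerSeries.coeff_mk,
      Finset.prod_Icc_succ_top (by omega), mul_left_comm, mul_inv_cancel₀ (ha _ (by omega)),
      mul_one]

theorem stmt7_general (N : ℕ) (z : ℂ) (lam : Fin (N + 1) → ℂ) (i : Fin (N + 1))
    (hres : ∀ j, ∀ r : ℕ, 1 ≤ r → lam i - lam j + r * z ≠ 0) :
    (List.ofFn (fun j : Fin (N + 1) => (fun f : PowerSeries ℂ =>
          PowerSeries.C (lam i - lam j) * f +
            PowerSeries.C z *
              PowerSeries.mk fun d => (d : ℂ) * PowerSeries.coeff d f))).foldr (· ∘ ·) id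
        (PowerSeries.mk fun d =>
          ∏ r ∈ Finset.Icc 1 d, ∏ j : Fin (N + 1), (lam i - lam j + r * z)⁻¹) =
      PowerSeries.X *
        PowerSeries.mk fun d =>
          ∏ r ∈ Finset.Icc 1 d, ∏ j : Fin (N + 1), (lam i - lam j + r * z)⁻¹ := by
  set a : ℕ → ℂ := fun r => ∏ j, (lam i - lam j + r * z)
  have h_series : (PowerSeries.mk fun d =>
      ∏ r ∈ Finset.Icc 1 d, ∏ j : Fin (N + 1), (lam i - lam j + r * z)⁻¹) =
        PowerSeries.mk fun d => ∏ r ∈ Finset.Icc 1 d, (a r)⁻¹ := by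
    simp only [a, Finset.prod_inv_distrib]
  have h_ops : List.ofFn (fun j : Fin (N + 1) => eulerShift z (lam i - lam j)) =
      (List.ofFn fun j => lam i - lam j).map (eulerShift z) := by
    rw [List.map_ofFn]; rfl
  have h0 : a 0 = 0 := Finset.prod_eq_zero (Finset.mem_univ i) (by simp)
  have ha : ∀ r, 1 ≤ r → a r ≠ 0 := fun r hr => Finset.prod_ne_zero_iff.2 fun j _ => hres j r hr
  rw [h_series, ← mk_mul_prod_Icc_inv_eq_X_mul a h0 ha]
  change (List.ofFn fun j => eulerShift z (lam i - lam j)).foldr (· ∘ ·) id _ = _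
  ext d
  rw [h_ops, coeff_foldr_map_eulerShift, List.map_ofFn, List.prod_ofFn, PowerSeries.coeff_mk,
    PowerSeries.coeff_mk]
  rfl

/-- The differential equation `((λ_i-λ_0) + zD)⋯((λ_i-λ_N) + zD) h = Q·h` for the formal
power series `h = Σ_d Q^d ∏_{r=1}^d ∏_{j=0}^N (λ_i - λ_j + rz)⁻¹`, where `D = Q·d/dQ`
on `ℂ[[Q]]`.  (This is the differential equation satisfied by the specialization at
`H = λ_i` of Givental's small equivariant cohomological J-function of `ℙ^N`, after
removing the prefactor `Q^{λ_i/z}`.) -/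
theorem stmt7 (N : ℕ) (z : ℂ) (hz : z ≠ 0) (lam : Fin (N + 1) → ℂ) (i : Fin (N + 1))
    (hres : ∀ j, ∀ r : ℕ, 1 ≤ r → lam i - lam j + r * z ≠ 0) :
    (List.ofFn (fun j : Fin (N + 1) => (fun f : PowerSeries ℂ =>
          PowerSeries.C (lam i - lam j) * f +
            PowerSeries.C z *
              PowerSeries.mk fun d => (d : ℂ) * PowerSeries.coeff d f))).foldr (· ∘ ·) id
        (PowerSeries.mk fun d =>
          ∏ r ∈ Finset.Icc 1 d, ∏ j : Fin (N + 1), (lam i - lam j + r * z)⁻¹) =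
      PowerSeries.X *
        PowerSeries.mk fun d =>
          ∏ r ∈ Finset.Icc 1 d, ∏ j : Fin (N + 1), (lam i - lam j + r * z)⁻¹ :=
  stmt7_general N z lam i hres
end

section
/- Let N ∈ ℕ and let q ∈ ℂ with 0 < |q| < 1. Work in the ring R = ℂ[x]/(x^{N+1}) and in formal power series R[[Q]]. For each r ≥ 1, the element 1 − q^r(1 − x̄) of R is invertible (its scalar part 1 − q^r is nonzero). Define g ∈ R[[Q]] whose d-th coefficient is ∏_{r=1}^d (1 − q^r(1 − x̄))^{−(N+1)}. Then g satisfies (Id − (1 − x̄)·σ_q)^{N+1}(g) = Q·g, where the operator is the (N+1)-st iterate of the R-linear endomorphism f ↦ f − (1 − x̄)·σ_q(f) of R[[Q]]. (This is the q-difference equation (1 − σ_q)^{N+1}J = QJ satisfied by Givental's small (non-equivariant) K-theoretical J-function of ℙ^N, rewritten in the K-theory ring K(ℙ^N)⊗ℂ ≅ ℂ[x]/(x^{N+1}) with P^{−1} = 1 − x̄, after removing the q-character prefactor P^{−ℓ_q(Q)}.) -/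
open Complex PowerSeries

/-- The ring `R = ℂ[x]/(x^{N+1})`, a model for `K(ℙ^N) ⊗ ℂ` (and for `H^*(ℙ^N;ℂ)`). -/
abbrev KRing (N : ℕ) : Type := AdjoinRoot ((Polynomial.X : Polynomial ℂ) ^ (N + 1))

/-- The class `x̄` of `x` in `ℂ[x]/(x^{N+1})`. -/
noncomputable def xbar (N : ℕ) : KRing N := AdjoinRoot.root _

/-!
Both `Id - (1 - x̄)σ_q` and its iterates act diagonally on the `Q`-expansion: on the coefficient
of `Q^d` they multiply by `A_d = 1 - q^d(1 - x̄)`, resp. its powers. Hence the `d`-th coefficient of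
the left-hand side is `A_d^{N+1} g_d`. For `d = 0` this is `x̄^{N+1} g_0 = 0`, and for `d ≥ 1` the
factor `A_d^{N+1}` cancels the last factor of `g_d = (A_1 ⋯ A_d)^{-(N+1)}`, leaving `g_{d-1}`,
the `d`-th coefficient of `Q g`. The factors `A_d` with `d ≥ 1` are units because `x̄` is nilpotent
and `q^d ≠ 1`.
-/

lemma xbar_pow_succ (N : ℕ) : xbar N ^ (N + 1) = 0 := by
  rw [xbar, ← AdjoinRoot.mk_X, ← map_pow, AdjoinRoot.mk_self]

lemma isUnit_one_sub_algebraMap_mul_one_sub {k R : Type*} [Field k] [Ring R] [Algebra k R]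
    {c : k} {x : R} (hc : c ≠ 1) (hx : IsNilpotent x) :
    IsUnit (1 - algebraMap k R c * (1 - x)) := by
  have hsplit : 1 - algebraMap k R c * (1 - x) = algebraMap k R c * x + algebraMap k R (1 - c) := by
    rw [map_sub, map_one]; noncomm_ring
  have hnil : IsNilpotent (algebraMap k R c * x) :=
    (Algebra.commute_algebraMap_left c x).isNilpotent_mul_left hx
  have hunit : IsUnit (algebraMap k R (1 - c)) := (sub_ne_zero.2 hc.symm).isUnit.map _
  rw [hsplit]
  exact hnil.isUnit_add_right_of_commute hunit (Algebra.commute_algebraMap_left _ _).symm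

lemma pow_ne_one_of_norm_lt_one {𝕜 : Type*} [NormedDivisionRing 𝕜] {q : 𝕜} (hq : ‖q‖ < 1)
    {r : ℕ} (hr : r ≠ 0) : q ^ r ≠ 1 := fun h =>
  (pow_lt_one₀ (norm_nonneg q) hq hr).ne (by rw [← norm_pow, h, norm_one])

lemma PowerSeries.coeff_iterate_sub_C_mul_mk {R : Type*} [CommRing R] (a : R) (c : ℕ → R)
    (k d : ℕ) (f : R⟦X⟧) :
    coeff d ((fun f : R⟦X⟧ => f - C a * mk fun d => c d * coeff d f)^[k] f) =
      (1 - c d * a) ^ k * coeff d f := by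
  induction k with
  | zero => simp
  | succ k ih =>
    rw [Function.iterate_succ_apply', map_sub, coeff_C_mul, coeff_mk, ih]
    ring

lemma mul_inverse_prod_Icc_succ_pow {R : Type*} [CommMonoidWithZero R] (A : ℕ → R) (m n : ℕ)
    (hA : IsUnit (A (n + 1))) :
    A (n + 1) ^ m * Ring.inverse ((∏ r ∈ Finset.Icc 1 (n + 1), A r) ^ m) =
      Ring.inverse ((∏ r ∈ Finset.Icc 1 n, A r) ^ m) := by
  rw [Finset.prod_Icc_succ_top (Nat.le_add_left 1 n), mul_pow, Ring.mul_inverse_rev,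
    ← mul_assoc, Ring.mul_inverse_cancel _ (hA.pow m), one_mul]

theorem stmt10_general (N : ℕ) (q : ℂ) (hq1 : ‖q‖ < 1) :
    (∀ r : ℕ, 1 ≤ r →
      IsUnit (1 - algebraMap ℂ (KRing N) (q ^ r) * (1 - xbar N))) ∧
    (fun f : PowerSeries (KRing N) =>
        f - PowerSeries.C (1 - xbar N) *
          PowerSeries.mk fun d => algebraMap ℂ (KRing N) (q ^ d) *
            PowerSeries.coeff d f)^[N + 1]
      (PowerSeries.mk fun d => Ring.inverse
        ((∏ r ∈ Finset.Icc 1 d,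
          (1 - algebraMap ℂ (KRing N) (q ^ r) * (1 - xbar N))) ^ (N + 1))) =
    PowerSeries.X *
      PowerSeries.mk fun d => Ring.inverse
        ((∏ r ∈ Finset.Icc 1 d,
          (1 - algebraMap ℂ (KRing N) (q ^ r) * (1 - xbar N))) ^ (N + 1)) := by
  have hunit (r : ℕ) (hr : 1 ≤ r) : IsUnit (1 - algebraMap ℂ (KRing N) (q ^ r) * (1 - xbar N)) :=
    isUnit_one_sub_algebraMap_mul_one_sub (pow_ne_one_of_norm_lt_one hq1 (by omega))
      ⟨N + 1, xbar_pow_succ N⟩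
  refine ⟨hunit, ?_⟩
  ext d
  rw [coeff_iterate_sub_C_mul_mk, coeff_mk]
  rcases d with _ | n
  · simp [coeff_zero_X_mul, xbar_pow_succ]
  · rw [coeff_succ_X_mul, coeff_mk]
    exact mul_inverse_prod_Icc_succ_pow (fun r => 1 - algebraMap ℂ (KRing N) (q ^ r) * (1 - xbar N))
      _ n (hunit (n + 1) (Nat.le_add_left 1 n))

/-- In `R = ℂ[x]/(x^{N+1})`: each `1 - q^r(1 - x̄)` (for `r ≥ 1`) is invertible, and
`g = Σ_d Q^d ∏_{r=1}^d (1 - q^r(1-x̄))^{-(N+1)} ∈ R[[Q]]` satisfies the q-difference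
equation `(Id - (1-x̄)σ_q)^{N+1} g = Q·g`.  (This is the q-difference equation satisfied
by Givental's small non-equivariant K-theoretical J-function of `ℙ^N`, with `P⁻¹ = 1 - x̄`,
after removing the q-character prefactor `P^{-ℓ_q(Q)}`.) -/
theorem stmt10 (N : ℕ) (q : ℂ) (hq0 : 0 < ‖q‖) (hq1 : ‖q‖ < 1) :
    (∀ r : ℕ, 1 ≤ r →
      IsUnit (1 - algebraMap ℂ (KRing N) (q ^ r) * (1 - xbar N))) ∧
    (fun f : PowerSeries (KRing N) =>
        f - PowerSeries.C (1 - xbar N) *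
          PowerSeries.mk fun d => algebraMap ℂ (KRing N) (q ^ d) *
            PowerSeries.coeff d f)^[N + 1]
      (PowerSeries.mk fun d => Ring.inverse
        ((∏ r ∈ Finset.Icc 1 d,
          (1 - algebraMap ℂ (KRing N) (q ^ r) * (1 - xbar N))) ^ (N + 1))) =
    PowerSeries.X *
      PowerSeries.mk fun d => Ring.inverse
        ((∏ r ∈ Finset.Icc 1 d,
          (1 - algebraMap ℂ (KRing N) (q ^ r) * (1 - xbar N))) ^ (N + 1)) :=
  stmt10_general N q hq1
end
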